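/- Zwegers' μ-function μ(x,y) = (i q^{-1/8} √(xy) / θ_q(-y)) ∑_{n∈ℤ} (-1)^n y^n q^{n(n+1)/2} / (1 - x q^n) satisfies the second-order q-difference equation μ(q²x, y) - q^{1/2}(1 - (x/y)q) μ(qx, y) - (x/y) q μ(x,y) = 0. -/

import Mathlib

open Complex Real

/-- The infinite q-Pochhammer symbol `(a;q)_∞ = ∏_{j≥0} (1 - a q^j)`. -/
noncomputable def qPochInf (a q : ℂ) : ℂ := ∏' j : ℕ, (1 - a * q ^ j)

/-- The theta function `θ_q(x) = (q;q)_∞ (-x;q)_∞ (-q/x;q)_∞`. -/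
noncomputable def thetaQ (q x : ℂ) : ℂ := qPochInf q q * qPochInf (-x) q * qPochInf (-q / x) q

/-- Zwegers' μ-function in multiplicative notation, with `x = e^{2πiu}`, `y = e^{2πiv}`,
`q = e^{2πiτ}` and the branch `√(xy) = e^{πi(u+v)}`, `q^{-1/8} = e^{-πiτ/4}`:
`μ(x,y) = i q^{-1/8} √(xy)/θ_q(-y) ∑_{n∈ℤ} (-1)^n y^n q^{n(n+1)/2}/(1 - x q^n)`. -/
noncomputable def zwegersMu (τ u v : ℂ) : ℂ :=
  I * Complex.exp (-(π : ℂ) * I * τ / 4) * Complex.exp ((π : ℂ) * I * (u + v)) /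
      thetaQ (Complex.exp (2 * (π : ℂ) * I * τ)) (-Complex.exp (2 * (π : ℂ) * I * v)) *
    ∑' n : ℤ,
      (-1 : ℂ) ^ n * Complex.exp (2 * (π : ℂ) * I * v) ^ n *
        Complex.exp (2 * (π : ℂ) * I * τ) ^ (n * (n + 1) / 2) /
        (1 - Complex.exp (2 * (π : ℂ) * I * u) * Complex.exp (2 * (π : ℂ) * I * τ) ^ n)

/-!
Write `a n = (-1)^n y^n q^(n(n+1)/2)`. Replacing `x` by `q^k x` in `∑ a n / (1 - x q^n)` shifts
the coefficients to `a (n - k)`, and the recursion `a (n + 1) = -y q^(n+1) a n` turns the numerator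
`a (n-2) - (1 - x q / y) a (n-1) - (x / y) a n` into `(a (n-2) - a (n-1)) (1 - x q^n)`. Hence the
three Appell–Lerch sums combine to the telescoping series `∑ (a (n-2) - a (n-1)) = 0`; the factor
`√(xy)` contributes `q^(1/2)` per shift, which produces the coefficients of the equation.
Convergence: `a` is a Jacobi theta series and `(1 - x q^n)⁻¹` is bounded away from finitely many `n`.
-/

open Filter Asymptotics Topology

section AppellLerch

variable {q x y : ℂ}

noncomputable def thetaCoeff (q y : ℂ) (n : ℤ) : ℂ := (-1) ^ n * y ^ n * q ^ (n * (n + 1) / 2)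

noncomputable def appellLerchSum (q x y : ℂ) : ℂ := ∑' n : ℤ, thetaCoeff q y n / (1 - x * q ^ n)

theorem thetaCoeff_add_one (hq : q ≠ 0) (hy : y ≠ 0) (n : ℤ) :
    thetaCoeff q y (n + 1) = -y * q ^ (n + 1) * thetaCoeff q y n := by
  have hexp : (n + 1) * (n + 1 + 1) / 2 = n * (n + 1) / 2 + (n + 1) := by
    rw [show (n + 1) * (n + 1 + 1) = n * (n + 1) + (n + 1) * 2 by ring,
      Int.add_mul_ediv_right _ _ two_ne_zero]
  rw [thetaCoeff, thetaCoeff, hexp, zpow_add_one₀ (neg_ne_zero.mpr one_ne_zero),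
    zpow_add_one₀ hy, zpow_add₀ hq]
  ring

theorem thetaCoeff_exp_eq_jacobiTheta₂_term (τ v : ℂ) (n : ℤ) :
    thetaCoeff (cexp (2 * π * I * τ)) (cexp (2 * π * I * v)) n =
      jacobiTheta₂_term n (v + 1 / 2 + τ / 2) τ := by
  have hk : ((n * (n + 1) / 2 : ℤ) : ℂ) * 2 = n * (n + 1) := by
    exact_mod_cast Int.ediv_mul_cancel (Int.even_mul_succ_self n).two_dvd
  rw [thetaCoeff, jacobiTheta₂_term, ← exp_pi_mul_I, ← exp_int_mul, ← exp_int_mul,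
    ← exp_int_mul, ← Complex.exp_add, ← Complex.exp_add]
  congr 1
  linear_combination (π * I * τ) * hk

theorem summable_thetaCoeff_exp {τ : ℂ} (hτ : 0 < τ.im) (v : ℂ) :
    Summable (thetaCoeff (cexp (2 * π * I * τ)) (cexp (2 * π * I * v))) :=
  ((summable_jacobiTheta₂_term_iff _ τ).mpr hτ).congr fun n =>
    (thetaCoeff_exp_eq_jacobiTheta₂_term τ v n).symm

theorem tendsto_zpow_atTop_nhds_zero_of_norm_lt_one {𝕜 : Type*} [NormedDivisionRing 𝕜] {r : 𝕜}
    (hr : ‖r‖ < 1) : Tendsto (fun n : ℤ => r ^ n) atTop (𝓝 0) := by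
  rw [← Nat.map_cast_int_atTop, tendsto_map'_iff]
  simpa [Function.comp_def] using tendsto_pow_atTop_nhds_zero_of_norm_lt_one hr

theorem isBigO_inv_one_sub_mul_zpow (hq : ‖q‖ < 1) (hq0 : q ≠ 0) (hx : x ≠ 0) :
    (fun n : ℤ => (1 - x * q ^ n)⁻¹) =O[cofinite] (fun _ => (1 : ℂ)) := by
  have hpow := tendsto_zpow_atTop_nhds_zero_of_norm_lt_one hq
  rw [Int.cofinite_eq]
  refine IsBigO.sup ?_ ?_
  · have hlim : Tendsto (fun n : ℤ => q ^ (-n) / (q ^ (-n) - x)) atBot (𝓝 0) := by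
      have h := hpow.comp tendsto_neg_atBot_atTop
      have h' := h.div (h.sub_const x) (by simpa using hx)
      rwa [zero_div] at h'
    refine (hlim.isBigO_one ℂ).congr_left fun n => ?_
    rw [show q ^ (-n) - x = q ^ (-n) * (1 - x * q ^ n) by
      rw [mul_sub, mul_one, mul_left_comm, zpow_neg, inv_mul_cancel₀ (zpow_ne_zero n hq0),
        mul_one]]
    exact div_mul_cancel_left₀ (zpow_ne_zero _ hq0) _
  · have hlim : Tendsto (fun n : ℤ => (1 - x * q ^ n)⁻¹) atTop (𝓝 1) := by
      simpa using ((hpow.const_mul x).const_sub 1).inv₀ (by simp)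
    exact hlim.isBigO_one ℂ

theorem Summable.div_one_sub_mul_zpow (hq : ‖q‖ < 1) (hq0 : q ≠ 0) (hx : x ≠ 0)
    {a : ℤ → ℂ} (ha : Summable a) : Summable fun n => a n / (1 - x * q ^ n) :=
  summable_of_isBigO' ha <| by
    simpa [div_eq_mul_inv] using (isBigO_refl a _).mul (isBigO_inv_one_sub_mul_zpow hq hq0 hx)

theorem appellLerchSum_zpow_mul (hq : q ≠ 0) (k : ℤ) :
    appellLerchSum q (q ^ k * x) y = ∑' n : ℤ, thetaCoeff q y (n - k) / (1 - x * q ^ n) := by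
  rw [appellLerchSum, ← (Equiv.subRight k).tsum_eq]
  refine tsum_congr fun n => ?_
  rw [Equiv.subRight_apply, mul_comm (q ^ k), mul_assoc, ← zpow_add₀ hq, add_sub_cancel]

theorem thetaCoeff_qdifference (hq : q ≠ 0) (hy : y ≠ 0) {n : ℤ} (hx : 1 - x * q ^ n ≠ 0) :
    thetaCoeff q y (n - 2) / (1 - x * q ^ n) -
        (1 - x / y * q) * (thetaCoeff q y (n - 1) / (1 - x * q ^ n)) -
        x / y * (thetaCoeff q y n / (1 - x * q ^ n)) =
      thetaCoeff q y (n - 2) - thetaCoeff q y (n - 1) := by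
  have h1 := thetaCoeff_add_one hq hy (n - 2)
  have h0 := thetaCoeff_add_one hq hy (n - 1)
  rw [show n - 2 + 1 = n - 1 by ring] at h1
  rw [sub_add_cancel] at h0
  have hqn : q ^ n = q ^ (n - 1) * q := by rw [← zpow_add_one₀ hq, sub_add_cancel]
  have hnum : thetaCoeff q y (n - 2) - (1 - x / y * q) * thetaCoeff q y (n - 1) -
      x / y * thetaCoeff q y n =
      (thetaCoeff q y (n - 2) - thetaCoeff q y (n - 1)) * (1 - x * q ^ n) := by
    rw [h0, h1, hqn]
    field_simp
    ring
  rw [← mul_div_cancel_right₀ (thetaCoeff q y (n - 2) - thetaCoeff q y (n - 1)) hx, ← hnum]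
  ring

theorem appellLerchSum_qdifference (hq : ‖q‖ < 1) (hq0 : q ≠ 0) (hx0 : x ≠ 0) (hy : y ≠ 0)
    (hx : ∀ n : ℤ, 1 - x * q ^ n ≠ 0) (ha : Summable (thetaCoeff q y)) :
    appellLerchSum q (q ^ 2 * x) y - (1 - x / y * q) * appellLerchSum q (q * x) y -
      x / y * appellLerchSum q x y = 0 := by
  have hshift (k : ℤ) : Summable fun n => thetaCoeff q y (n - k) :=
    ((Equiv.subRight k).summable_iff (f := thetaCoeff q y)).mpr ha
  have hreindex (k : ℤ) : ∑' n : ℤ, thetaCoeff q y (n - k) = ∑' n : ℤ, thetaCoeff q y n :=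
    (Equiv.subRight k).tsum_eq _
  have hsum (k : ℤ) : Summable fun n => thetaCoeff q y (n - k) / (1 - x * q ^ n) :=
    (hshift k).div_one_sub_mul_zpow hq hq0 hx0
  have h2 := appellLerchSum_zpow_mul (x := x) (y := y) hq0 2
  have h1 := appellLerchSum_zpow_mul (x := x) (y := y) hq0 1
  rw [zpow_ofNat] at h2
  rw [zpow_one] at h1
  rw [h2, h1, appellLerchSum]
  calc _ = ∑' n : ℤ, (thetaCoeff q y (n - 2) / (1 - x * q ^ n) -
          (1 - x / y * q) * (thetaCoeff q y (n - 1) / (1 - x * q ^ n)) -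
          x / y * (thetaCoeff q y n / (1 - x * q ^ n))) := by
        rw [((hsum 2).sub ((hsum 1).mul_left _)).tsum_sub
          ((ha.div_one_sub_mul_zpow hq hq0 hx0).mul_left _),
          (hsum 2).tsum_sub ((hsum 1).mul_left _), tsum_mul_left, tsum_mul_left]
    _ = ∑' n : ℤ, (thetaCoeff q y (n - 2) - thetaCoeff q y (n - 1)) :=
        tsum_congr fun n => thetaCoeff_qdifference hq0 hy (hx n)
    _ = 0 := by
        rw [(hshift 2).tsum_sub (hshift 1), hreindex, hreindex, sub_self]

end AppellLerch

theorem zwegersMu_eq_mul_appellLerchSum (τ u v : ℂ) :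
    zwegersMu τ u v =
      I * cexp (-π * I * τ / 4) * cexp (π * I * (u + v)) /
          thetaQ (cexp (2 * π * I * τ)) (-cexp (2 * π * I * v)) *
        appellLerchSum (cexp (2 * π * I * τ)) (cexp (2 * π * I * u)) (cexp (2 * π * I * v)) :=
  rfl

theorem zwegersMu_qdifference_general (τ u v : ℂ) (hτ : 0 < τ.im)
    (hu : ∀ n : ℤ, Complex.exp (2 * (π : ℂ) * I * u) ≠ Complex.exp (2 * (π : ℂ) * I * τ) ^ n) :
    zwegersMu τ (u + 2 * τ) v -
      Complex.exp ((π : ℂ) * I * τ) *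
        (1 - Complex.exp (2 * (π : ℂ) * I * (u - v)) * Complex.exp (2 * (π : ℂ) * I * τ)) *
        zwegersMu τ (u + τ) v -
      Complex.exp (2 * (π : ℂ) * I * (u - v)) * Complex.exp (2 * (π : ℂ) * I * τ) *
        zwegersMu τ u v = 0 := by
  have hsq : cexp (π * I * τ) ^ 2 = cexp (2 * π * I * τ) := by
    rw [← Complex.exp_nat_mul]; ring_nf
  set q := cexp (2 * π * I * τ)
  set x := cexp (2 * π * I * u)
  set y := cexp (2 * π * I * v)
  have hq : ‖q‖ < 1 := UpperHalfPlane.norm_exp_two_pi_I_lt_one ⟨τ, hτ⟩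
  have hx : ∀ n : ℤ, 1 - x * q ^ n ≠ 0 := fun n h => hu (-n) <| by
    rw [zpow_neg]
    exact eq_inv_of_mul_eq_one_left (sub_eq_zero.mp h).symm
  have hx2 : cexp (2 * π * I * (u + 2 * τ)) = q ^ 2 * x := by
    rw [← Complex.exp_nat_mul, ← Complex.exp_add]; ring_nf
  have hx1 : cexp (2 * π * I * (u + τ)) = q * x := by
    rw [← Complex.exp_add]; ring_nf
  have hr2 : cexp (π * I * (u + 2 * τ + v)) = q * cexp (π * I * (u + v)) := by
    rw [← Complex.exp_add]; ring_nf
  have hr1 : cexp (π * I * (u + τ + v)) = cexp (π * I * τ) * cexp (π * I * (u + v)) := by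
    rw [← Complex.exp_add]; ring_nf
  have hxy : cexp (2 * π * I * (u - v)) = x / y := by
    rw [← Complex.exp_sub]; ring_nf
  have key := appellLerchSum_qdifference hq (Complex.exp_ne_zero _) (Complex.exp_ne_zero _)
    (Complex.exp_ne_zero _) hx (summable_thetaCoeff_exp hτ v)
  simp only [zwegersMu_eq_mul_appellLerchSum, hx2, hx1, hr2, hr1, hxy]
  set C := I * cexp (-π * I * τ / 4) * cexp (π * I * (u + v)) / thetaQ q (-y)
  linear_combination (C * q) * key -
    C * (1 - x / y * q) * appellLerchSum q (q * x) y * hsq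

/-- The μ-function satisfies the q-Hermite–Weber type second-order q-difference equation
`μ(q²x,y) - q^{1/2}(1-(x/y)q) μ(qx,y) - (x/y)q μ(x,y) = 0`, where shifting `x ↦ qx`
corresponds to `u ↦ u + τ`. -/
theorem zwegersMu_qdifference (τ u v : ℂ) (hτ : 0 < τ.im)
    (hu : ∀ n : ℤ, Complex.exp (2 * (π : ℂ) * I * u) ≠ Complex.exp (2 * (π : ℂ) * I * τ) ^ n)
    (hv : ∀ n : ℤ, Complex.exp (2 * (π : ℂ) * I * v) ≠ Complex.exp (2 * (π : ℂ) * I * τ) ^ n) :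
    zwegersMu τ (u + 2 * τ) v -
      Complex.exp ((π : ℂ) * I * τ) *
        (1 - Complex.exp (2 * (π : ℂ) * I * (u - v)) * Complex.exp (2 * (π : ℂ) * I * τ)) *
        zwegersMu τ (u + τ) v -
      Complex.exp (2 * (π : ℂ) * I * (u - v)) * Complex.exp (2 * (π : ℂ) * I * τ) *
        zwegersMu τ u v = 0 :=
  zwegersMu_qdifference_general τ u v hτ hu
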